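/- arXiv:2402.04022 — 2 statements merged into one kernel-verified Lean document; each statement's English description precedes it below -/
import Mathlib

section
/- Given 5 distinct real numbers t_1 < t_2 < t_3 < t_4 < t_5, the space of vectors (a_1,...,a_5) ∈ ℝ^5 satisfying Σ_{i=1}^5 a_i·(e^{-t_i}, t_i e^{-t_i}, e^{t_i}, t_i e^{t_i}) = (0,0,0,0) is exactly one-dimensional. -/
/-!
By rank–nullity it suffices that the four rows are linearly independent, i.e. that a combination
`(a + b s) e^{-s} + (c + d s) e^s` vanishing at four distinct points is zero. Multiplied by `e^s`
it becomes `a + b s + (c + d s) e^{2s}`, whose second derivative is `4 (c + d + d s) e^{2s}`.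
Rolle's theorem, applied twice, gives this two zeros, forcing `c = d = 0`; then `a + b s` has four
zeros as well.
-/

open Real

theorem Matrix.finrank_ker_mulVecLin_of_linearIndependent_row {K m n : Type*} [Field K]
    [Fintype m] [Fintype n] {M : Matrix m n K} (h : LinearIndependent K M.row) :
    Module.finrank K (LinearMap.ker M.mulVecLin) = Fintype.card n - Fintype.card m := by
  have hrank : Module.finrank K (LinearMap.range M.mulVecLin) = Fintype.card m := h.rank_matrix
  have := M.mulVecLin.finrank_range_add_finrank_ker
  rw [Module.finrank_fintype_fun_eq_card] at this
  omega

theorem StrictMono.exists_strictMono_hasDerivAt_zeros {n : ℕ} {f f' : ℝ → ℝ}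
    (hf : ∀ s, HasDerivAt f (f' s) s) {x : Fin (n + 2) → ℝ} (hx : StrictMono x)
    (hzero : ∀ i, f (x i) = 0) :
    ∃ y : Fin (n + 1) → ℝ, StrictMono y ∧ ∀ i, f' (y i) = 0 := by
  have hrolle (i : Fin (n + 1)) :
      ∃ w ∈ Set.Ioo (x i.castSucc) (x i.succ), f' w = 0 :=
    exists_hasDerivAt_eq_zero (hx i.castSucc_lt_succ)
      (fun s _ => (hf s).continuousAt.continuousWithinAt)
      ((hzero _).trans (hzero _).symm) (fun s _ => hf s)
  choose y hy hy' using hrolle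
  refine ⟨y, Fin.strictMono_iff_lt_succ.mpr fun i => ?_, hy'⟩
  calc y i.castSucc < x i.castSucc.succ := (hy _).2
    _ = x i.succ.castSucc := by rw [Fin.succ_castSucc]
    _ < y i.succ := (hy _).1

theorem eq_zero_of_add_mul_eq_zero {a b x y : ℝ} (hxy : x ≠ y) (hx : a + b * x = 0)
    (hy : a + b * y = 0) : a = 0 ∧ b = 0 := by
  have hb : b = 0 := by
    have : b * (x - y) = 0 := by linear_combination hx - hy
    exact (mul_eq_zero.mp this).resolve_right (sub_ne_zero.mpr hxy)
  exact ⟨by simpa [hb] using hx, hb⟩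

theorem hasDerivAt_add_mul_mul_exp_two_mul (c d s : ℝ) :
    HasDerivAt (fun u => (c + d * u) * exp (2 * u))
      ((2 * c + d + 2 * d * s) * exp (2 * s)) s := by
  have hlin : HasDerivAt (fun u => c + d * u) d s := by
    simpa using ((hasDerivAt_id s).const_mul d).const_add c
  have hexp : HasDerivAt (fun u => exp (2 * u)) (exp (2 * s) * 2) s := by
    simpa using ((hasDerivAt_id s).const_mul 2).exp
  exact (hlin.mul hexp).congr_deriv (by ring)

theorem eq_zero_of_forall_exp_combination_eq_zero {a b c d : ℝ} {x : Fin 4 → ℝ}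
    (hx : StrictMono x)
    (hzero : ∀ i, a * exp (-x i) + b * (x i * exp (-x i)) + c * exp (x i)
      + d * (x i * exp (x i)) = 0) :
    a = 0 ∧ b = 0 ∧ c = 0 ∧ d = 0 := by
  set g₀ : ℝ → ℝ := fun s => a + b * s + (c + d * s) * exp (2 * s)
  set g₁ : ℝ → ℝ := fun s => b + (2 * c + d + 2 * d * s) * exp (2 * s)
  set g₂ : ℝ → ℝ := fun s => (4 * c + 4 * d + 4 * d * s) * exp (2 * s)
  have hg₀ (s : ℝ) : HasDerivAt g₀ (g₁ s) s :=
    ((((hasDerivAt_id' s).const_mul b).const_add a).add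
      (hasDerivAt_add_mul_mul_exp_two_mul c d s)).congr_deriv (by ring)
  have hg₁ (s : ℝ) : HasDerivAt g₁ (g₂ s) s :=
    ((hasDerivAt_add_mul_mul_exp_two_mul (2 * c + d) (2 * d) s).const_add b).congr_deriv
      (by ring)
  have hx₀ (i : Fin 4) : g₀ (x i) = 0 := by
    have hsplit : exp (x i) = exp (-x i) * exp (2 * x i) := by
      rw [← exp_add]; congr 1; ring
    have h : exp (-x i) * g₀ (x i) = 0 := by
      simp only [g₀]; linear_combination hzero i - (c + d * x i) * hsplit
    exact (mul_eq_zero.mp h).resolve_left (exp_pos _).ne'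
  obtain ⟨y, hy, hy₁⟩ := hx.exists_strictMono_hasDerivAt_zeros hg₀ hx₀
  obtain ⟨z, hz, hz₂⟩ := hy.exists_strictMono_hasDerivAt_zeros hg₁ hy₁
  have hlin (i : Fin 2) : 4 * c + 4 * d + 4 * d * z i = 0 :=
    (mul_eq_zero.mp (hz₂ i)).resolve_right (exp_pos _).ne'
  obtain ⟨hcd, hd⟩ := eq_zero_of_add_mul_eq_zero (hz.injective.ne zero_ne_one) (hlin 0) (hlin 1)
  replace hd : d = 0 := by linarith
  have hc : c = 0 := by linarith
  have hab (i : Fin 4) : a + b * x i = 0 := by simpa [g₀, hc, hd] using hx₀ i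
  obtain ⟨ha, hb⟩ := eq_zero_of_add_mul_eq_zero (hx.injective.ne zero_ne_one) (hab 0) (hab 1)
  exact ⟨ha, hb, hc, hd⟩

theorem stmt_3 (t : Fin 5 → ℝ) (ht : StrictMono t) :
    Module.finrank ℝ
      (LinearMap.ker (Matrix.mulVecLin
        (Matrix.of fun (i : Fin 4) (j : Fin 5) =>
          ![Real.exp (-(t j)), t j * Real.exp (-(t j)),
            Real.exp (t j), t j * Real.exp (t j)] i))) = 1 := by
  refine (Matrix.finrank_ker_mulVecLin_of_linearIndependent_row ?_).trans (by simp)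
  refine Fintype.linearIndependent_iff.mpr fun g hg => ?_
  have hzero (j : Fin 4) := by
    simpa [Fin.sum_univ_four] using congrFun hg j.castSucc
  obtain ⟨h₀, h₁, h₂, h₃⟩ :=
    eq_zero_of_forall_exp_combination_eq_zero (ht.comp Fin.strictMono_castSucc) hzero
  intro i
  fin_cases i <;> assumption
end

section
/- Let F : ℝ → Matrix(m,m,ℝ) be continuous with trace F(t) = 0 for all t, let B = (0,...,0,1)ᵀ ∈ ℝ^m, and let Π : ℝ → Matrix(m,m,ℝ) be differentiable satisfying Π'(t) = F(t)Π(t) + Π(t)F(t)ᵀ + BBᵀ. Then the derivative of det Π(t) equals the determinant of the top-left (m−1)×(m−1) submatrix of Π(t). -/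
/-!
By Jacobi's formula, `(det Π)' = tr (adj Π · Π')`. Since `adj Π · Π = Π · adj Π = det Π · 1`,
the terms `F Π` and `Π Fᵀ` of `Π'` contribute `det Π · tr F = 0`, and what remains,
`tr (adj Π · B Bᵀ) = (adj Π)ₘₘ`, is the cofactor of the last diagonal entry of `Π`.
-/

open Matrix Finset

namespace Matrix

section CommRing

variable {n R : Type*} [Fintype n] [DecidableEq n] [CommRing R]

theorem trace_adjugate_mul (A M : Matrix n n R) :
    (adjugate A * M).trace = ∑ i, (A.updateCol i fun k => M k i).det := by
  refine sum_congr rfl fun i _ => ?_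
  rw [← cramer_apply, cramer_eq_adjugate_mulVec]
  rfl

theorem prod_updateCol_perm (A : Matrix n n R) (σ : Equiv.Perm n) (i : n) (v : n → R) :
    ∏ j, A.updateCol i v (σ j) j = v (σ i) * ∏ j ∈ univ.erase i, A (σ j) j := by
  have hupdate : (fun j => A.updateCol i v (σ j) j) =
      Function.update (fun j => A (σ j) j) i (v (σ i)) := by
    ext j
    by_cases h : j = i <;> simp [h]
  rw [hupdate, prod_update_of_mem (mem_univ i), sdiff_singleton_eq_erase]

theorem trace_adjugate_mul_lyapunov {F : Matrix n n R} (hF : F.trace = 0)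
    (P : Matrix n n R) (b : n → R) :
    (adjugate P * (F * P + P * Fᵀ + vecMulVec b b)).trace = (adjugate P *ᵥ b) ⬝ᵥ b := by
  have hFP : (adjugate P * (F * P)).trace = 0 := by
    rw [← Matrix.mul_assoc, trace_mul_cycle, mul_adjugate, Matrix.smul_mul, Matrix.one_mul,
      trace_smul, hF, smul_zero]
  have hPF : (adjugate P * (P * Fᵀ)).trace = 0 := by
    rw [← Matrix.mul_assoc, adjugate_mul, Matrix.smul_mul, Matrix.one_mul, trace_smul,
      trace_transpose, hF, smul_zero]
  rw [Matrix.mul_add, Matrix.mul_add, trace_add, trace_add, hFP, hPF, mul_vecMulVec,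
    trace_vecMulVec, zero_add, zero_add]

end CommRing

theorem adjugate_last_last {R : Type*} [CommRing R] {m : ℕ}
    (A : Matrix (Fin (m + 1)) (Fin (m + 1)) R) :
    adjugate A (Fin.last m) (Fin.last m) = (A.submatrix Fin.castSucc Fin.castSucc).det := by
  rw [adjugate_fin_succ_eq_det_submatrix, Fin.succAbove_last, ← two_mul, pow_mul, neg_one_sq,
    one_pow, one_mul]

theorem hasDerivAt_det {n 𝕜 : Type*} [Fintype n] [DecidableEq n] [NontriviallyNormedField 𝕜]
    {A : 𝕜 → Matrix n n 𝕜} {A' : Matrix n n 𝕜} {t : 𝕜}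
    (h : ∀ i j, HasDerivAt (fun s => A s i j) (A' i j) t) :
    HasDerivAt (fun s => (A s).det) (adjugate (A t) * A').trace t := by
  have hperm : HasDerivAt (fun s => (A s).det)
      (∑ σ : Equiv.Perm n, (Equiv.Perm.sign σ : 𝕜) *
        ∑ i, (∏ j ∈ univ.erase i, A t (σ j) j) • A' (σ i) i) t := by
    simp only [det_apply']
    exact HasDerivAt.fun_sum fun σ _ =>
      (HasDerivAt.fun_finsetProd fun i _ => h (σ i) i).const_mul _
  convert hperm using 1
  simp only [trace_adjugate_mul, det_apply', prod_updateCol_perm, smul_eq_mul, mul_sum]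
  rw [sum_comm]
  exact sum_congr rfl fun σ _ => sum_congr rfl fun i _ => by ring

end Matrix

theorem stmt_7_general (m : ℕ)
    (F : ℝ → Matrix (Fin (m + 1)) (Fin (m + 1)) ℝ)
    (hFtr : ∀ t, (F t).trace = 0)
    (B : Fin (m + 1) → ℝ) (hB : B = Pi.single (Fin.last m) 1)
    (P : ℝ → Matrix (Fin (m + 1)) (Fin (m + 1)) ℝ)
    (hP : ∀ t i j, HasDerivAt (fun s => P s i j)
      ((F t * P t + P t * (F t)ᵀ + vecMulVec B B) i j) t) :
    ∀ t : ℝ, deriv (fun s => (P s).det) t =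
      ((P t).submatrix (Fin.castSucc : Fin m → Fin (m + 1)) Fin.castSucc).det := by
  intro t
  rw [(hasDerivAt_det (hP t)).deriv, trace_adjugate_mul_lyapunov (hFtr t), hB,
    mulVec_single_one, dotProduct_single_one, col_apply, adjugate_last_last]

theorem stmt_7 (m : ℕ)
    (F : ℝ → Matrix (Fin (m + 1)) (Fin (m + 1)) ℝ)
    (hFcont : ∀ i j, Continuous fun t => F t i j)
    (hFtr : ∀ t, (F t).trace = 0)
    (B : Fin (m + 1) → ℝ) (hB : B = Pi.single (Fin.last m) 1)
    (P : ℝ → Matrix (Fin (m + 1)) (Fin (m + 1)) ℝ)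
    (hP : ∀ t i j, HasDerivAt (fun s => P s i j)
      ((F t * P t + P t * (F t)ᵀ + vecMulVec B B) i j) t) :
    ∀ t : ℝ, deriv (fun s => (P s).det) t =
      ((P t).submatrix (Fin.castSucc : Fin m → Fin (m + 1)) Fin.castSucc).det :=
  stmt_7_general m F hFtr B hB P hP
end
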